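/- Let n ≥ 3 and let 2 ≤ r ≤ n−1. Then Σ_{σ ∈ S_n} fix(σ)^r · ( C(fix(σ)−1, 2) − c₂(σ) ) = n! · Σ_{i=2}^{r} C(i,2) · S(r,i), where C(a,b) denotes the binomial coefficient. Representation-theoretically, this says the multiplicity of the irreducible representation S^{(n−2,1,1)} of S_n in the r-th tensor power of the n-dimensional permutation representation equals Σ_{i=2}^{r} C(i,2) S(r,i). -/

import Mathlib

/-!
Write `f(σ)` for the number of fixed points, `(f)ₖ` for the falling factorial and
`χ(σ) = C(f(σ) - 1, 2) - c₂(σ)`. Since `f^r = ∑ₖ S(r,k) (f)ₖ`, it suffices to show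
`∑_σ (f σ)ₖ χ(σ) = n! C(k,2)` for `k < n`. Double counting pairs (permutation, `k`-set of its
fixed points) gives `∑_σ (f σ)ₖ = n!` for `k ≤ n`; counting in addition a pair transposed by
the permutation gives `∑_σ 2 c₂(σ) (f σ)ₖ = ∑_σ (f σ)ₖ₊₂`. Now
`(f - 1)(f - 2)(f)ₖ = (f)ₖ₊₂ + 2(k - 1)(f)ₖ₊₁ + (k - 1)(k - 2)(f)ₖ`, and the `(f)ₖ₊₂` terms
cancel against the 2-cycles, leaving `n! (2(k - 1) + (k - 1)(k - 2)) = 2 n! C(k,2)`.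
-/

/-- Stirling numbers of the second kind. -/
def stirling : ℕ → ℕ → ℕ
  | 0, 0 => 1
  | 0, _ + 1 => 0
  | _ + 1, 0 => 0
  | n + 1, k + 1 => (k + 1) * stirling n (k + 1) + stirling n k

/-- The number of fixed points of a permutation of `Fin n`. -/
def fixCount {n : ℕ} (σ : Equiv.Perm (Fin n)) : ℕ :=
  (Finset.univ.filter fun x => σ x = x).card

/-- The number of 2-cycles (transpositions) in the cycle decomposition of a permutation. -/
def twoCycleCount {n : ℕ} (σ : Equiv.Perm (Fin n)) : ℕ :=
  Multiset.count 2 σ.cycleType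

open Finset Equiv Polynomial
open scoped Nat

theorem stirling_eq_stirlingSecond : stirling = Nat.stirlingSecond := by
  ext n k
  induction n generalizing k with
  | zero => cases k <;> rfl
  | succ n ih => cases k <;> simp [stirling, Nat.stirlingSecond, ih]

section FallingFactorials

variable {R : Type*} [CommRing R]

theorem X_pow_eq_sum_stirlingSecond_mul_descPochhammer (n : ℕ) :
    (X : R[X]) ^ n = ∑ k ∈ range (n + 1), (n.stirlingSecond k : R[X]) * descPochhammer R k := by
  induction n with
  | zero => simp
  | succ n ih =>
    set S : ℕ → R[X] := fun k => (n.stirlingSecond k : R[X])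
    set P : ℕ → R[X] := descPochhammer R
    have hX (k : ℕ) : X * P k = P (k + 1) + (k : R[X]) * P k := by
      simp only [P, descPochhammer_succ_right]; ring
    have hshift : ∑ k ∈ range (n + 1), S k * ((k : R[X]) * P k) =
        ∑ k ∈ range (n + 1), ((k : R[X]) + 1) * S (k + 1) * P (k + 1) := by
      rw [sum_range_succ' (fun k => S k * ((k : R[X]) * P k)), sum_range_succ]
      simp only [S, Nat.stirlingSecond_eq_zero_of_lt (Nat.lt_succ_self n), Nat.cast_zero,
        zero_mul, mul_zero, add_zero, Nat.cast_add, Nat.cast_one]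
      exact sum_congr rfl fun k _ => by ring
    calc X ^ (n + 1) = ∑ k ∈ range (n + 1), S k * (X * P k) := by
          rw [pow_succ', ih, mul_sum]; exact sum_congr rfl fun k _ => by ring
      _ = ∑ k ∈ range (n + 1), (((k : R[X]) + 1) * S (k + 1) + S k) * P (k + 1) := by
          simp only [hX, mul_add, sum_add_distrib, hshift, add_mul]; ring
      _ = _ := by
          rw [sum_range_succ' _ (n + 1)]
          simp [S, P, Nat.stirlingSecond_succ_succ]

theorem Nat.cast_pow_eq_sum_stirlingSecond_mul_descFactorial (x n : ℕ) :
    (x : R) ^ n = ∑ k ∈ range (n + 1), (n.stirlingSecond k : R) * x.descFactorial k := by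
  simpa [eval_finsetSum, descPochhammer_eval_eq_descFactorial] using
    congr_arg (eval (x : R)) (X_pow_eq_sum_stirlingSecond_mul_descPochhammer (R := R) n)

theorem Nat.cast_descFactorial_succ (x k : ℕ) :
    (x.descFactorial (k + 1) : R) = x.descFactorial k * ((x : R) - k) := by
  rw [← descPochhammer_eval_eq_descFactorial, ← descPochhammer_eval_eq_descFactorial,
    descPochhammer_succ_right, eval_mul]
  simp

theorem sub_one_mul_sub_two_mul_descFactorial (x k : ℕ) :
    ((x : R) - 1) * ((x : R) - 2) * x.descFactorial k =
      x.descFactorial (k + 2) + 2 * ((k : R) - 1) * x.descFactorial (k + 1) +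
        ((k : R) - 1) * ((k : R) - 2) * x.descFactorial k := by
  rw [Nat.cast_descFactorial_succ, Nat.cast_descFactorial_succ]
  push_cast
  ring

theorem two_mul_ringChoose_two [BinomialRing R] (x : R) :
    2 * Ring.choose x 2 = x * (x - 1) := by
  have h := Ring.descPochhammer_eq_factorial_smul_choose x 2
  rw [descPochhammer_succ_right, descPochhammer_one, smeval_mul, smeval_X, smeval_sub,
    smeval_X] at h
  simpa using h.symm

end FallingFactorials

section Permutations

variable {α : Type*} [Fintype α] [DecidableEq α]

namespace Equiv.Perm

theorem card_support_cycleOf_eq_two_iff {σ : Perm α} {x : α} (hx : σ x ≠ x) :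
    #(σ.cycleOf x).support = 2 ↔ σ (σ x) = x := by
  have hc := σ.isCycle_cycleOf hx
  rw [← hc.orderOf, orderOf_eq_prime_iff,
    hc.pow_eq_one_iff' (x := x) (by rwa [cycleOf_apply_self]), cycleOf_pow_apply_self,
    Ne, cycleOf_eq_one_iff, sq, mul_apply]
  exact and_iff_left hx

theorem two_mul_count_two_cycleType (σ : Perm α) :
    2 * σ.cycleType.count 2 = #{x | σ x ≠ x ∧ σ (σ x) = x} := by
  set T := σ.cycleFactorsFinset.filter fun c => #c.support = 2
  have hT : σ.cycleType.count 2 = #T := by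
    rw [cycleType_def, Multiset.count_map]
    simp_rw [Function.comp_apply, eq_comm (a := 2)]
    rfl
  have hmaps : ∀ x ∈ ({x | σ x ≠ x ∧ σ (σ x) = x} : Finset α), σ.cycleOf x ∈ T := by
    intro x hx
    obtain ⟨hx, hxx⟩ := (mem_filter.1 hx).2
    exact mem_filter.2 ⟨cycleOf_mem_cycleFactorsFinset_iff.2 (mem_support.2 hx),
      (card_support_cycleOf_eq_two_iff hx).2 hxx⟩
  have hfiber (c) (hc : c ∈ T) :
      #{x ∈ ({x | σ x ≠ x ∧ σ (σ x) = x} : Finset α) | σ.cycleOf x = c} = 2 := by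
    obtain ⟨hcσ, hc2⟩ := mem_filter.1 hc
    convert hc2 using 2
    ext x
    simp only [mem_filter, mem_univ, true_and]
    constructor
    · rintro ⟨⟨hx, -⟩, rfl⟩
      exact mem_support_cycleOf_iff.2 ⟨SameCycle.refl _ _, mem_support.2 hx⟩
    · intro hxc
      obtain rfl := cycle_is_cycleOf hxc hcσ
      have hx := mem_support.1 (mem_cycleFactorsFinset_support_le hcσ hxc)
      exact ⟨⟨hx, (card_support_cycleOf_eq_two_iff hx).1 hc2⟩, rfl⟩
  rw [card_eq_sum_card_fiberwise hmaps, sum_congr rfl hfiber, sum_const, smul_eq_mul, hT, mul_comm]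

end Equiv.Perm

theorem card_perm_fixing (s : Finset α) :
    #{σ : Perm α | ∀ x ∈ s, σ x = x} = (Fintype.card α - #s)! := by
  have hfix : #{σ : Perm α | ∀ x ∈ s, σ x = x} =
      Fintype.card {σ : Perm α // ∀ x, ¬x ∉ s → σ x = x} := by
    simp only [not_not, Fintype.card_subtype]
  rw [hfix, ← Fintype.card_congr (Perm.subtypeEquivSubtypePerm (· ∉ s)),
    Fintype.card_perm, Fintype.card_subtype_compl, Fintype.card_coe]

theorem card_perm_eqOn (τ : Perm α) (s : Finset α) :
    #{σ : Perm α | ∀ x ∈ s, σ x = τ x} = (Fintype.card α - #s)! := by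
  rw [← card_perm_fixing s]
  refine card_equiv (Equiv.mulLeft τ⁻¹) fun σ => ?_
  simp [Equiv.eq_symm_apply, eq_comm]

theorem choose_card_filter (p : α → Prop) [DecidablePred p] (k : ℕ) :
    (#{x | p x}).choose k = #{s ∈ powersetCard k univ | ∀ x ∈ s, p x} := by
  rw [← card_powersetCard]
  congr 1
  ext s
  simp [mem_powersetCard, subset_iff, and_comm]

theorem sum_choose_card_fixedPoints (k : ℕ) :
    ∑ σ : Perm α, (#{x | σ x = x}).choose k =
      (Fintype.card α).choose k * (Fintype.card α - k)! := by
  simp_rw [choose_card_filter]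
  calc _ = ∑ s ∈ powersetCard k univ, #{σ : Perm α | ∀ x ∈ s, σ x = x} :=
        sum_card_bipartiteAbove_eq_sum_card_bipartiteBelow _
    _ = _ := by
        rw [sum_congr rfl fun s hs => by rw [card_perm_fixing, (mem_powersetCard.1 hs).2],
          sum_const, card_powersetCard, Finset.card_univ, smul_eq_mul]

theorem sum_descFactorial_card_fixedPoints (k : ℕ) :
    ∑ σ : Perm α, (#{x | σ x = x}).descFactorial k =
      (Fintype.card α).descFactorial k * (Fintype.card α - k)! := by
  simp_rw [Nat.descFactorial_eq_factorial_mul_choose, ← mul_sum, sum_choose_card_fixedPoints,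
    mul_assoc]

theorem sum_choose_card_fixedPoints_of_swap {x y : α} (hxy : x ≠ y) (k : ℕ) :
    ∑ σ : Perm α with σ x = y ∧ σ y = x, (#{z | σ z = z}).choose k =
      (Fintype.card α - 2).choose k * (Fintype.card α - (k + 2))! := by
  set t : Finset α := univ \ {x, y}
  have ht : #t = Fintype.card α - 2 := by
    rw [card_sdiff_of_subset (subset_univ _), card_pair hxy, Finset.card_univ]
  have hchoose (σ : Perm α) (hσ : σ ∈ ({σ | σ x = y ∧ σ y = x} : Finset (Perm α))) :
      (#{z | σ z = z}).choose k = #{s ∈ powersetCard k t | ∀ z ∈ s, σ z = z} := by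
    obtain ⟨hx, hy⟩ := (mem_filter.1 hσ).2
    rw [choose_card_filter]
    congr 1
    ext s
    simp only [mem_filter, mem_powersetCard, subset_univ, true_and, t, subset_sdiff,
      disjoint_insert_right, disjoint_singleton_right, and_assoc]
    constructor
    · rintro ⟨hs, hfix⟩
      exact ⟨fun hxs => hxy ((hfix x hxs).symm.trans hx),
        fun hys => hxy ((hfix y hys).symm.trans hy).symm, hs, hfix⟩
    · rintro ⟨-, -, hs, hfix⟩
      exact ⟨hs, hfix⟩
  have hcount (s) (hs : s ∈ powersetCard k t) :
      #{σ ∈ ({σ | σ x = y ∧ σ y = x} : Finset (Perm α)) | ∀ z ∈ s, σ z = z} =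
        (Fintype.card α - (k + 2))! := by
    obtain ⟨hst, rfl⟩ := mem_powersetCard.1 hs
    have hxs : x ∉ s := fun h => (mem_sdiff.1 (hst h)).2 (by simp)
    have hys : y ∉ s := fun h => (mem_sdiff.1 (hst h)).2 (by simp)
    have hcard : #(insert x (insert y s)) = #s + 2 := by
      rw [card_insert_of_notMem (by simp [hxy, hxs]), card_insert_of_notMem hys]
    rw [filter_filter, ← hcard, ← card_perm_eqOn (swap x y)]
    congr 1
    ext σ
    simp only [mem_filter, mem_univ, true_and, forall_mem_insert, swap_apply_left,
      swap_apply_right, and_assoc]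
    refine and_congr_right fun _ => and_congr_right fun _ => forall₂_congr fun z hz => ?_
    rw [swap_apply_of_ne_of_ne (ne_of_mem_of_not_mem hz hxs) (ne_of_mem_of_not_mem hz hys)]
  calc _ = ∑ s ∈ powersetCard k t,
        #{σ ∈ ({σ | σ x = y ∧ σ y = x} : Finset (Perm α)) | ∀ z ∈ s, σ z = z} := by
        rw [sum_congr rfl hchoose]
        exact sum_card_bipartiteAbove_eq_sum_card_bipartiteBelow _
    _ = _ := by rw [sum_congr rfl hcount, sum_const, card_powersetCard, ht, smul_eq_mul]

theorem card_twoCyclePoints_eq_card_swappedPairs (σ : Perm α) :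
    #{x | σ x ≠ x ∧ σ (σ x) = x} = #{p ∈ univ.offDiag | σ p.1 = p.2 ∧ σ p.2 = p.1} := by
  refine card_nbij' (fun x => (x, σ x)) Prod.fst ?_ ?_ ?_ ?_
  · intro x hx
    obtain ⟨hx, hxx⟩ := (mem_filter.1 hx).2
    simpa using ⟨Ne.symm hx, hxx⟩
  · rintro ⟨x, y⟩ h
    obtain ⟨-, -, hxy⟩ := mem_filter.1 h
    simp_all [Ne.symm]
  · intro x _; rfl
  · rintro ⟨x, y⟩ h; simp_all

theorem sum_card_twoCyclePoints_mul_choose_card_fixedPoints (k : ℕ) :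
    ∑ σ : Perm α, #{x | σ x ≠ x ∧ σ (σ x) = x} * (#{x | σ x = x}).choose k =
      (Fintype.card α).descFactorial 2 * ((Fintype.card α - 2).choose k *
        (Fintype.card α - (k + 2))!) := by
  have hoff : #(univ : Finset α).offDiag = (Fintype.card α).descFactorial 2 := by
    rw [offDiag_card, Finset.card_univ, ← Nat.mul_sub_one, Nat.descFactorial_succ,
      Nat.descFactorial_one, mul_comm]
  simp_rw [card_twoCyclePoints_eq_card_swappedPairs, ← smul_eq_mul, ← sum_const, sum_filter]
  rw [sum_comm, ← hoff, ← sum_const]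
  refine sum_congr rfl fun p hp => ?_
  rw [← sum_filter, smul_eq_mul]
  exact sum_choose_card_fixedPoints_of_swap (mem_offDiag.1 hp).2.2 k

/-- The character of `S^(n-2,1,1) ≅ Λ² (standard representation)` at `σ`. -/
def wedgeSquareStdCharacter (σ : Perm α) : ℤ :=
  Ring.choose ((#{x | σ x = x} : ℤ) - 1) 2 - σ.cycleType.count 2

theorem sum_two_mul_count_two_cycleType_mul_descFactorial_card_fixedPoints (k : ℕ) :
    ∑ σ : Perm α, 2 * σ.cycleType.count 2 * (#{x | σ x = x}).descFactorial k =
      ∑ σ : Perm α, (#{x | σ x = x}).descFactorial (k + 2) := by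
  have hdesc : (Fintype.card α).descFactorial (k + 2) =
      (Fintype.card α).descFactorial 2 * (k ! * (Fintype.card α - 2).choose k) := by
    rw [← Nat.descFactorial_mul_descFactorial (Nat.le_add_left 2 k), Nat.add_sub_cancel,
      Nat.descFactorial_eq_factorial_mul_choose, mul_comm]
  calc _ = k ! * ∑ σ : Perm α, #{x | σ x ≠ x ∧ σ (σ x) = x} * (#{x | σ x = x}).choose k := by
        rw [mul_sum]
        refine sum_congr rfl fun σ _ => ?_
        rw [Perm.two_mul_count_two_cycleType, Nat.descFactorial_eq_factorial_mul_choose]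
        ring
    _ = _ := by
        rw [sum_card_twoCyclePoints_mul_choose_card_fixedPoints,
          sum_descFactorial_card_fixedPoints, hdesc]
        ring

theorem sum_descFactorial_card_fixedPoints_mul_wedgeSquareStdCharacter {k : ℕ}
    (hk : k < Fintype.card α) :
    ∑ σ : Perm α, ((#{x | σ x = x}).descFactorial k : ℤ) * wedgeSquareStdCharacter σ =
      (Fintype.card α)! * k.choose 2 := by
  set f : Perm α → ℕ := fun σ => #{x | σ x = x}
  have hD (j : ℕ) (hj : j ≤ Fintype.card α) :
      ∑ σ : Perm α, ((f σ).descFactorial j : ℤ) = (Fintype.card α)! := by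
    rw [← Nat.factorial_mul_descFactorial hj, mul_comm]
    exact_mod_cast sum_descFactorial_card_fixedPoints j
  have hC : ∑ σ : Perm α, (2 * σ.cycleType.count 2 * (f σ).descFactorial k : ℤ) =
      ∑ σ : Perm α, ((f σ).descFactorial (k + 2) : ℤ) := by
    exact_mod_cast sum_two_mul_count_two_cycleType_mul_descFactorial_card_fixedPoints k
  have hpoint (σ : Perm α) : 2 * (((f σ).descFactorial k : ℤ) * wedgeSquareStdCharacter σ) =
      (f σ).descFactorial (k + 2) - 2 * σ.cycleType.count 2 * (f σ).descFactorial k +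
        2 * ((k : ℤ) - 1) * (f σ).descFactorial (k + 1) +
        ((k : ℤ) - 1) * ((k : ℤ) - 2) * (f σ).descFactorial k := by
    have h := two_mul_ringChoose_two ((f σ : ℤ) - 1)
    have h' := sub_one_mul_sub_two_mul_descFactorial (R := ℤ) (f σ) k
    simp only [wedgeSquareStdCharacter]
    linear_combination (f σ).descFactorial k * h + h'
  have hchoose : 2 * (k.choose 2 : ℤ) = k * (k - 1) := by
    rw [← Ring.choose_natCast, two_mul_ringChoose_two]
  refine mul_left_cancel₀ (two_ne_zero (α := ℤ)) ?_
  rw [mul_sum, sum_congr rfl fun σ _ => hpoint σ]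
  simp only [sum_add_distrib, sum_sub_distrib, ← mul_sum, hC, hD k hk.le, hD (k + 1) hk]
  linear_combination -(Fintype.card α)! * hchoose

theorem sum_card_fixedPoints_pow_mul_wedgeSquareStdCharacter {r : ℕ}
    (hr : r < Fintype.card α) :
    ∑ σ : Perm α, (#{x | σ x = x} : ℤ) ^ r * wedgeSquareStdCharacter σ =
      (Fintype.card α)! * ∑ i ∈ Icc 2 r, (i.choose 2 : ℤ) * r.stirlingSecond i := by
  have hsupport : ∑ i ∈ Icc 2 r, (i.choose 2 : ℤ) * r.stirlingSecond i =
      ∑ k ∈ range (r + 1), (r.stirlingSecond k : ℤ) * k.choose 2 := by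
    refine sum_subset (fun i hi => ?_) (fun k hkr hk => ?_) |>.trans
      (sum_congr rfl fun k _ => mul_comm _ _)
    · simp only [mem_Icc] at hi; simp only [mem_range]; omega
    · simp only [mem_Icc, mem_range] at hkr hk
      rw [Nat.choose_eq_zero_of_lt (by omega)]
      simp
  simp_rw [Nat.cast_pow_eq_sum_stirlingSecond_mul_descFactorial, sum_mul, hsupport, mul_sum]
  rw [sum_comm]
  refine sum_congr rfl fun k hk => ?_
  have hk : k < Fintype.card α := by simp only [mem_range] at hk; omega
  simp_rw [mul_assoc, ← mul_sum]
  rw [sum_descFactorial_card_fixedPoints_mul_wedgeSquareStdCharacter hk]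
  ring

end Permutations

theorem multiplicity_S_n_minus_2_1_1_in_tensor_power_general (n r : ℕ) (hn : 3 ≤ n)
    (hrn : r ≤ n - 1) :
    ∑ σ : Equiv.Perm (Fin n),
        (fixCount σ : ℤ) ^ r *
          (Ring.choose ((fixCount σ : ℤ) - 1) 2 - (twoCycleCount σ : ℤ)) =
      (Nat.factorial n : ℤ) *
        ∑ i ∈ Finset.Icc 2 r, (Nat.choose i 2 : ℤ) * (stirling r i : ℤ) := by
  have h := sum_card_fixedPoints_pow_mul_wedgeSquareStdCharacter (α := Fin n) (r := r)
    (by rw [Fintype.card_fin]; omega)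
  rw [Fintype.card_fin] at h
  rw [stirling_eq_stirlingSecond]
  exact h

theorem multiplicity_S_n_minus_2_1_1_in_tensor_power (n r : ℕ) (hn : 3 ≤ n)
    (hr1 : 2 ≤ r) (hrn : r ≤ n - 1) :
    ∑ σ : Equiv.Perm (Fin n),
        (fixCount σ : ℤ) ^ r *
          (Ring.choose ((fixCount σ : ℤ) - 1) 2 - (twoCycleCount σ : ℤ)) =
      (Nat.factorial n : ℤ) *
        ∑ i ∈ Finset.Icc 2 r, (Nat.choose i 2 : ℤ) * (stirling r i : ℤ) :=
  multiplicity_S_n_minus_2_1_1_in_tensor_power_general n r hn hrn
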